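/- Let 𝒜 ⊆ E^∞, x⃗ a finite block sequence, and X, Y block subspaces with Y ⊆* X. If I has a strategy in the relational game B_X(x⃗) to play in 𝒜, then I has a strategy in B_Y(x⃗) to play in 𝒜. -/

import Mathlib

section Defs

variable {𝔽 : Type} [Field 𝔽] {E : Type} [AddCommGroup E] [Module 𝔽 E]

/-- The support of a vector with respect to the basis `b`. -/
noncomputable def supp (b : Module.Basis ℕ 𝔽 E) (x : E) : Finset ℕ :=
  (b.repr x).support

/-- `VecLt b x y` means `x < y`: every element of the support of `x` is smaller than
every element of the support of `y`. -/
def VecLt (b : Module.Basis ℕ 𝔽 E) (x y : E) : Prop :=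
  ∀ m ∈ supp b x, ∀ n ∈ supp b y, m < n

/-- `NatLt b k x` means `k < x`: `k` is smaller than every element of the support of `x`. -/
def NatLt (b : Module.Basis ℕ 𝔽 E) (k : ℕ) (x : E) : Prop :=
  ∀ n ∈ supp b x, k < n

/-- An infinite block sequence: a sequence of nonzero vectors with `x n < x (n + 1)`. -/
def IsBlockSeq (b : Module.Basis ℕ 𝔽 E) (x : ℕ → E) : Prop :=
  (∀ n, x n ≠ 0) ∧ ∀ n, VecLt b (x n) (x (n + 1))

/-- A finite block sequence: a list of nonzero vectors, consecutively increasing in the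
block ordering. -/
def IsFinBlockSeq (b : Module.Basis ℕ 𝔽 E) (l : List E) : Prop :=
  (∀ x ∈ l, x ≠ 0) ∧ l.Chain' (VecLt b)

/-- A block subspace: a subspace spanned by an infinite block sequence. -/
def IsBlockSubspace (b : Module.Basis ℕ 𝔽 E) (X : Submodule 𝔽 E) : Prop :=
  ∃ y : ℕ → E, IsBlockSeq b y ∧ X = Submodule.span 𝔽 (Set.range y)

/-- The list of the first `n` values of a sequence. -/
def hist {α : Type _} (x : ℕ → α) (n : ℕ) : List α :=
  List.ofFn (fun j : Fin n => x j)

/-- The concatenation of a finite prefix with an infinite sequence. -/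
def prefCat {α : Type _} (l : List α) (x : ℕ → α) : ℕ → α := fun n =>
  if h : n < l.length then l.get ⟨n, h⟩ else x (n - l.length)

/-- `Y ⊆* X`: `Y` is spanned by an infinite block sequence all but finitely many of
whose terms belong to `X`. -/
def SubsetStar (b : Module.Basis ℕ 𝔽 E) (Y X : Submodule 𝔽 E) : Prop :=
  ∃ y : ℕ → E, IsBlockSeq b y ∧ Y = Submodule.span 𝔽 (Set.range y) ∧
    ∃ N : ℕ, ∀ m, N ≤ m → y m ∈ X

/-- The interleaving `x 0, y 0, x 1, y 1, …` of two sequences. -/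
def interleave {α : Type _} (x y : ℕ → α) : ℕ → α := fun k =>
  if k % 2 = 0 then x (k / 2) else y (k / 2)

/-- Helper: the sequence of integers produced by a strategy answering plays
`p i : E × Submodule 𝔽 E` with a vector and an integer, starting with `n0`. -/
def natsA (n0 : ℕ) (σ : List (E × Submodule 𝔽 E) → E × ℕ)
    (p : ℕ → E × Submodule 𝔽 E) : ℕ → ℕ
  | 0 => n0
  | k + 1 => (σ (hist p (k + 1))).2

/-- Player I has a strategy in the relational game `B_X(pre)` to play in `A`
(case of an even-length prefix): II plays block subspaces `Z i ≤ X` and nonzero vectors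
`y i ∈ X` with `n i < y i`, II's vectors forming a block sequence; I answers `Z i` with
a nonzero vector `x i ∈ Z i` (I's vectors forming a block sequence) and a strictly
increasing integer `n i`.  The outcome is `pre` followed by `x 0, y 0, x 1, y 1, …`. -/
def IWinsBEven (b : Module.Basis ℕ 𝔽 E) (X : Submodule 𝔽 E) (pre : List E)
    (A : Set (ℕ → E)) : Prop :=
  ∃ τ : List (Submodule 𝔽 E × E) → Submodule 𝔽 E → E × ℕ,
    ∀ (Z : ℕ → Submodule 𝔽 E) (y : ℕ → E),
      (∀ i, IsBlockSubspace b (Z i) ∧ Z i ≤ X ∧ y i ∈ X ∧ y i ≠ 0 ∧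
          NatLt b (τ (hist (fun j => (Z j, y j)) i) (Z i)).2 (y i) ∧
          VecLt b (y i) (y (i + 1))) →
      (∀ i, (τ (hist (fun j => (Z j, y j)) i) (Z i)).1 ∈ Z i ∧
          (τ (hist (fun j => (Z j, y j)) i) (Z i)).1 ≠ 0 ∧
          VecLt b (τ (hist (fun j => (Z j, y j)) i) (Z i)).1
            (τ (hist (fun j => (Z j, y j)) (i + 1)) (Z (i + 1))).1 ∧
          (τ (hist (fun j => (Z j, y j)) i) (Z i)).2 <
            (τ (hist (fun j => (Z j, y j)) (i + 1)) (Z (i + 1))).2) ∧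
        prefCat pre
          (interleave (fun i => (τ (hist (fun j => (Z j, y j)) i) (Z i)).1) y) ∈ A

/-- Player I has a strategy in the relational game `B_X(pre)` to play in `A`
(case of an odd-length prefix): I opens with an integer `t0`; II plays nonzero vectors
`y i ∈ X` with `n i < y i`, forming a block sequence, together with block subspaces
`Z i ≤ X`; I answers with a nonzero vector `x i ∈ Z i` (I's vectors forming a block
sequence) and the next integer `n (i+1)`, the integers being strictly increasing.  The
outcome is `pre` followed by `y 0, x 0, y 1, x 1, …`. -/
def IWinsBOdd (b : Module.Basis ℕ 𝔽 E) (X : Submodule 𝔽 E) (pre : List E)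
    (A : Set (ℕ → E)) : Prop :=
  ∃ (t0 : ℕ) (τ : List (E × Submodule 𝔽 E) → E × ℕ),
    ∀ q : ℕ → E × Submodule 𝔽 E,
      (∀ i, (q i).1 ∈ X ∧ (q i).1 ≠ 0 ∧ NatLt b (natsA t0 τ q i) (q i).1 ∧
          VecLt b (q i).1 (q (i + 1)).1 ∧ IsBlockSubspace b (q i).2 ∧ (q i).2 ≤ X) →
      (∀ i, (τ (hist q (i + 1))).1 ∈ (q i).2 ∧ (τ (hist q (i + 1))).1 ≠ 0 ∧
          VecLt b (τ (hist q (i + 1))).1 (τ (hist q (i + 2))).1 ∧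
          natsA t0 τ q i < natsA t0 τ q (i + 1)) ∧
        prefCat pre
          (interleave (fun i => (q i).1) (fun i => (τ (hist q (i + 1))).1)) ∈ A

/-- Player I has a strategy in the relational game `B_X(pre)` to play in `A`. -/
def IWinsB (b : Module.Basis ℕ 𝔽 E) (X : Submodule 𝔽 E) (pre : List E)
    (A : Set (ℕ → E)) : Prop :=
  if pre.length % 2 = 0 then IWinsBEven b X pre A else IWinsBOdd b X pre A

end Defs

/-! Since `Y ⊆* X`, there is an `M` such that every vector of `Y` supported above `M` lies in
`X`. Player I plays in `B_Y(x⃗)` by simulating the strategy for `B_X(x⃗)` with two changes: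
a block subspace `Z ⊆ Y` proposed by II is replaced by a tail of its block basis, a block
subspace of `Z ∩ X`, before it is passed to the old strategy; and every integer the old strategy
plays is raised by `M`, which forces II's vectors above `M` and hence into `X`. A run of `B_Y(x⃗)`
thus yields a legal run of `B_X(x⃗)` with the same outcome, and I's moves, taken in subspaces of
II's subspaces, are legal in `B_Y(x⃗)`. -/

open Set

section BlockSubspaces

variable {𝔽 : Type} [Field 𝔽] {E : Type} [AddCommGroup E] [Module 𝔽 E]
  {b : Module.Basis ℕ 𝔽 E}

lemma supp_nonempty {x : E} (hx : x ≠ 0) : (supp b x).Nonempty := by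
  rwa [supp, Finsupp.support_nonempty_iff, ne_eq, LinearEquiv.map_eq_zero_iff]

lemma VecLt.trans {x y z : E} (hxy : VecLt b x y) (hyz : VecLt b y z) (hy : y ≠ 0) :
    VecLt b x z := by
  obtain ⟨k, hk⟩ := supp_nonempty (b := b) hy
  exact fun m hm n hn => (hxy m hm k hk).trans (hyz k hk n hn)

lemma NatLt.mono {j k : ℕ} {v : E} (h : NatLt b k v) (hjk : j ≤ k) : NatLt b j v :=
  fun n hn => hjk.trans_lt (h n hn)

lemma IsBlockSeq.vecLt_of_lt {y : ℕ → E} (hy : IsBlockSeq b y) {m m' : ℕ} (h : m < m') :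
    VecLt b (y m) (y m') := by
  induction m', h using Nat.le_induction with
  | base => exact hy.2 m
  | succ k _ ih => exact ih.trans (hy.2 k) (hy.1 k)

lemma IsBlockSeq.le_of_mem_supp {y : ℕ → E} (hy : IsBlockSeq b y) {m n : ℕ}
    (hn : n ∈ supp b (y m)) : m ≤ n := by
  induction m generalizing n with
  | zero => exact Nat.zero_le n
  | succ k ih =>
    obtain ⟨p, hp⟩ := supp_nonempty (b := b) (hy.1 k)
    exact (ih hp).trans_lt (hy.2 k p hp n hn)

lemma IsBlockSeq.exists_cut {y : ℕ → E} (hy : IsBlockSeq b y) (k : ℕ) :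
    ∃ M, (∀ m ≤ k, ∀ n ∈ supp b (y m), n ≤ M) ∧
      ∀ m, k < m → ∀ n ∈ supp b (y m), M < n := by
  have hmax := Finset.max'_mem _ (supp_nonempty (b := b) (hy.1 k))
  refine ⟨_, fun m hm n hn => ?_, fun m hm n hn => hy.vecLt_of_lt hm _ hmax n hn⟩
  rcases hm.lt_or_eq with hm | rfl
  · exact (hy.vecLt_of_lt hm n hn _ hmax).le
  · exact Finset.le_max' _ n hn

lemma IsBlockSeq.comp_add_right {y : ℕ → E} (hy : IsBlockSeq b y) (k : ℕ) :
    IsBlockSeq b (fun m => y (m + k)) :=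
  ⟨fun _ => hy.1 _, fun m => by simpa only [Nat.add_right_comm] using hy.2 (m + k)⟩

noncomputable def supportedIn (b : Module.Basis ℕ 𝔽 E) (s : Set ℕ) : Submodule 𝔽 E :=
  (Finsupp.supported 𝔽 𝔽 s).comap b.repr.toLinearMap

lemma mem_supportedIn {s : Set ℕ} {v : E} :
    v ∈ supportedIn b s ↔ ∀ n ∈ supp b v, n ∈ s := by
  rw [supportedIn, Submodule.mem_comap, Finsupp.mem_supported]
  rfl

lemma natLt_iff_mem_supportedIn {M : ℕ} {v : E} : NatLt b M v ↔ v ∈ supportedIn b (Ioi M) :=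
  mem_supportedIn.symm

lemma disjoint_supportedIn {s t : Set ℕ} (h : Disjoint s t) :
    Disjoint (supportedIn b s : Submodule 𝔽 E) (supportedIn b t) := by
  refine Submodule.disjoint_def.2 fun v hs ht => ?_
  simpa using Submodule.disjoint_def.1
    (Finsupp.disjoint_supported_supported (M := 𝔽) (R := 𝔽) h) _ hs ht

lemma SubsetStar.exists_inf_supportedIn_Ioi_le {X Y : Submodule 𝔽 E} (h : SubsetStar b Y X) :
    ∃ M, Y ⊓ supportedIn b (Ioi M) ≤ X := by
  obtain ⟨y, hy, rfl, N, hN⟩ := h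
  obtain ⟨M, hle, hlt⟩ := hy.exists_cut N
  -- Split `v ∈ Y` into a combination of `y 0, …, y N`, supported in `Iic M`, and one of the
  -- later `y m`, lying in `X`; the first part is then also supported in `Ioi M`, so it vanishes.
  have hspan : Submodule.span 𝔽 (range y) ≤
      supportedIn b (Iic M) ⊔ (supportedIn b (Ioi M) ⊓ X) := by
    rw [Submodule.span_le]
    rintro _ ⟨m, rfl⟩
    rcases le_or_gt m N with hm | hm
    · exact Submodule.mem_sup_left (mem_supportedIn.2 (hle m hm))
    · exact Submodule.mem_sup_right
        (Submodule.mem_inf.2 ⟨mem_supportedIn.2 (hlt m hm), hN m hm.le⟩)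
  refine ⟨M, fun v hv => ?_⟩
  obtain ⟨hvY, hvM⟩ := Submodule.mem_inf.1 hv
  obtain ⟨l, hl, w, hw, rfl⟩ := Submodule.mem_sup.1 (hspan hvY)
  obtain ⟨hwM, hwX⟩ := Submodule.mem_inf.1 hw
  have hl0 : l = 0 := Submodule.disjoint_def.1 (disjoint_supportedIn (Iic_disjoint_Ioi le_rfl))
    l hl (by simpa using sub_mem hvM hwM)
  rwa [hl0, zero_add]

lemma IsBlockSubspace.exists_blockSubspace_le_inf_supportedIn_Ioi {Z : Submodule 𝔽 E}
    (hZ : IsBlockSubspace b Z) (M : ℕ) :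
    ∃ W, IsBlockSubspace b W ∧ W ≤ Z ⊓ supportedIn b (Ioi M) := by
  obtain ⟨z, hz, rfl⟩ := hZ
  refine ⟨Submodule.span 𝔽 (range fun m => z (m + (M + 1))), ⟨_, hz.comp_add_right _, rfl⟩,
    Submodule.span_le.2 ?_⟩
  rintro _ ⟨m, rfl⟩
  refine Submodule.mem_inf.2
    ⟨Submodule.subset_span ⟨_, rfl⟩, mem_supportedIn.2 fun n hn => ?_⟩
  have := hz.le_of_mem_supp hn
  exact Set.mem_Ioi.2 (by omega)

lemma IsBlockSubspace.exists_blockSubspace_le_of_inf_supportedIn_Ioi_le {X Y Z : Submodule 𝔽 E}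
    {M : ℕ} (hZ : IsBlockSubspace b Z) (hZY : Z ≤ Y) (hM : Y ⊓ supportedIn b (Ioi M) ≤ X) :
    ∃ W, IsBlockSubspace b W ∧ W ≤ Z ∧ W ≤ X := by
  obtain ⟨W, hW, hWZ⟩ := hZ.exists_blockSubspace_le_inf_supportedIn_Ioi M
  obtain ⟨hWZ, hWM⟩ := le_inf_iff.1 hWZ
  exact ⟨W, hW, hWZ, (le_inf (hWZ.trans hZY) hWM).trans hM⟩

lemma hist_comp {α β : Type _} (f : α → β) (q : ℕ → α) (n : ℕ) :
    hist (f ∘ q) n = (hist q n).map f := by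
  simp only [hist, List.map_ofFn]
  rfl

variable {X Y : Submodule 𝔽 E} {M : ℕ} {pre : List E} {A : Set (ℕ → E)}

lemma mem_of_natLt_add (hM : Y ⊓ supportedIn b (Ioi M) ≤ X) {n : ℕ} {v : E} (hv : v ∈ Y)
    (hnv : NatLt b (n + M) v) : v ∈ X ∧ NatLt b n v :=
  ⟨hM (Submodule.mem_inf.2 ⟨hv, natLt_iff_mem_supportedIn.1 (hnv.mono (by omega))⟩),
    hnv.mono (by omega)⟩

theorem IWinsBEven.of_inf_supportedIn_Ioi_le (hM : Y ⊓ supportedIn b (Ioi M) ≤ X)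
    (h : IWinsBEven b X pre A) : IWinsBEven b Y pre A := by
  choose! s hs using fun Z (hZ : IsBlockSubspace b Z) (hZY : Z ≤ Y) =>
    hZ.exists_blockSubspace_le_of_inf_supportedIn_Ioi_le hZY hM
  obtain ⟨τ, hτ⟩ := h
  refine ⟨fun l Z => Prod.map id (· + M) (τ (l.map (Prod.map s id)) (s Z)),
    fun Z y hplay => ?_⟩
  have hhist : ∀ i, (hist (fun j => (Z j, y j)) i).map (Prod.map s id) =
      hist (fun j => (s (Z j), y j)) i := fun i => (hist_comp _ _ i).symm
  simp only [hhist, Prod.map_fst, Prod.map_snd, id] at hplay ⊢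
  have hsZ i := hs (Z i) (hplay i).1 (hplay i).2.1
  obtain ⟨hmoves, hA⟩ := hτ (fun i => s (Z i)) y fun i => by
    obtain ⟨-, -, hyY, hy0, hny, hyy⟩ := hplay i
    obtain ⟨hyX, hny⟩ := mem_of_natLt_add hM hyY hny
    exact ⟨(hsZ i).1, (hsZ i).2.2, hyX, hy0, hny, hyy⟩
  refine ⟨fun i => ?_, hA⟩
  obtain ⟨hxZ, hx0, hxx, hnn⟩ := hmoves i
  exact ⟨(hsZ i).2.1 hxZ, hx0, hxx, Nat.add_lt_add_right hnn M⟩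

theorem IWinsBOdd.of_inf_supportedIn_Ioi_le (hM : Y ⊓ supportedIn b (Ioi M) ≤ X)
    (h : IWinsBOdd b X pre A) : IWinsBOdd b Y pre A := by
  choose! s hs using fun Z (hZ : IsBlockSubspace b Z) (hZY : Z ≤ Y) =>
    hZ.exists_blockSubspace_le_of_inf_supportedIn_Ioi_le hZY hM
  obtain ⟨t0, τ, hτ⟩ := h
  refine ⟨t0 + M, fun l => Prod.map id (· + M) (τ (l.map (Prod.map id s))), fun q hplay => ?_⟩
  set q' := Prod.map id s ∘ q
  have hhist : ∀ i, (hist q i).map (Prod.map id s) = hist q' i := fun i => (hist_comp _ _ i).symm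
  have hnats : ∀ i,
      natsA (t0 + M) (fun l => Prod.map id (· + M) (τ (l.map (Prod.map id s)))) q i =
        natsA t0 τ q' i + M := by
    rintro (_ | i)
    · rfl
    · simp only [natsA, hhist, Prod.map_snd]
  simp only [hnats, hhist, Prod.map_fst, id] at hplay ⊢
  have hsZ i := hs (q i).2 (hplay i).2.2.2.2.1 (hplay i).2.2.2.2.2
  obtain ⟨hmoves, hA⟩ := hτ q' fun i => by
    obtain ⟨hyY, hy0, hny, hyy, -⟩ := hplay i
    obtain ⟨hyX, hny⟩ := mem_of_natLt_add hM hyY hny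
    exact ⟨hyX, hy0, hny, hyy, (hsZ i).1, (hsZ i).2.2⟩
  refine ⟨fun i => ?_, hA⟩
  obtain ⟨hxZ, hx0, hxx, hnn⟩ := hmoves i
  exact ⟨(hsZ i).2.1 hxZ, hx0, hxx, Nat.add_lt_add_right hnn M⟩

end BlockSubspaces

theorem IWinsB_subsetStar_general
    {𝔽 : Type} [Field 𝔽]
    {E : Type} [AddCommGroup E] [Module 𝔽 E]
    (b : Module.Basis ℕ 𝔽 E) (A : Set (ℕ → E))
    (pre : List E)
    (X Y : Submodule 𝔽 E)
    (hYX : SubsetStar b Y X) (h : IWinsB b X pre A) :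
    IWinsB b Y pre A := by
  obtain ⟨M, hM⟩ := hYX.exists_inf_supportedIn_Ioi_le
  unfold IWinsB at h ⊢
  split_ifs at h ⊢
  · exact h.of_inf_supportedIn_Ioi_le hM
  · exact h.of_inf_supportedIn_Ioi_le hM

theorem IWinsB_subsetStar
    {𝔽 : Type} [Field 𝔽] [Countable 𝔽]
    {E : Type} [AddCommGroup E] [Module 𝔽 E]
    (b : Module.Basis ℕ 𝔽 E) (A : Set (ℕ → E))
    (pre : List E) (hpre : IsFinBlockSeq b pre)
    (X Y : Submodule 𝔽 E) (hX : IsBlockSubspace b X) (hY : IsBlockSubspace b Y)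
    (hYX : SubsetStar b Y X) (h : IWinsB b X pre A) :
    IWinsB b Y pre A :=
  IWinsB_subsetStar_general b A pre X Y hYX h
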